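/- arXiv:1904.12422 — 2 statements merged into one kernel-verified Lean document; each statement's English description precedes it below -/
import Mathlib

section
/- The GAPG mechanism is individually rational: a truthful winner i has utility v_{i,sum} − v*_sum(P_i^close, n_k) ≥ v*_sum(N, n_k) − v*_sum(P_i^close, n_k) ≥ 0 (since the n_k-th largest n_k-sum valuation over all buyers is at least that over the subset P_i^close), and a truthful loser receives the nonnegative rebate v*_sum(N, n_k) − v*_sum(P_i^close, n_k) ≥ 0. -/
open scoped Classical

/-- `kthLargest S f m` is the `m`-th largest (1-indexed) value of `f` on the finite set `S`,
with the convention that it is `0` if `S` has fewer than `m` elements. -/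
noncomputable def kthLargest {α : Type*} (S : Finset α) (f : α → ℝ) (m : ℕ) : ℝ :=
  if 1 ≤ m ∧ m ≤ S.card then ((S.val.map f).sort (· ≤ ·)).getD (S.card - m) 0 else 0

/-- The `n_k`-sum valuation of a buyer: the sum of her first `n_k = ⌊√k⌋` marginal values. -/
noncomputable def nkSum (k : ℕ) {n : ℕ} (v : Fin n → ℕ → ℝ) (i : Fin n) : ℝ :=
  ∑ l ∈ Finset.range (Nat.sqrt k), v i l

/-- The rank of buyer `i` among the informed buyers `A` by declared `n_k`-sum valuation,
ties broken in favor of smaller indices. -/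
noncomputable def rank {n : ℕ} (A : Finset (Fin n)) (f : Fin n → ℝ) (i : Fin n) : ℕ :=
  (A.filter (fun j => f i < f j ∨ (f j = f i ∧ j < i))).card

/-- GAPG winners: the (up to `n_k`) informed buyers with the highest declared `n_k`-sum
valuations, ties broken by index. -/
noncomputable def Wins (k : ℕ) {n : ℕ} (A : Finset (Fin n)) (v : Fin n → ℕ → ℝ) (i : Fin n) : Prop :=
  i ∈ A ∧ rank A (nkSum k v) i < Nat.sqrt k

/-- GAPG utility of buyer `i` with true marginal values `vtrue`, when `A` is the set of
informed buyers and `v'` the declared valuations: a winner gets `n_k` items and pays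
`v*_sum(P_i^close, n_k)`; a loser receives the rebate
`v*_sum(N, n_k) − v*_sum(P_i^close, n_k)`. -/
noncomputable def gapgUtil (k : ℕ) {n : ℕ} (A : Finset (Fin n)) (v' : Fin n → ℕ → ℝ)
    (i : Fin n) (vtrue : ℕ → ℝ) : ℝ :=
  if Wins k A v' i then
    (∑ l ∈ Finset.range (Nat.sqrt k), vtrue l)
      - kthLargest (A.filter (· < i)) (nkSum k v') (Nat.sqrt k)
  else
    kthLargest A (nkSum k v') (Nat.sqrt k)
      - kthLargest (A.filter (· < i)) (nkSum k v') (Nat.sqrt k)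

/-! The `m`-th largest value is the entry at index `#S - m` of the ascending sort of the values.
Counting the entries on either side of that index shows that it is `≥ a` as soon as `m` values
are `≥ a`, and `≤ a` for `a ≥ 0` as soon as fewer than `m` values are `> a` (nonnegativity pays
for the default value `0` when `#S < m`). The first criterion makes `kthLargest` monotone in the
set, so `v*_sum(P_i^close) ≤ v*_sum(N)`; the second applies to a winner, whose rank is below
`n_k`, so `v*_sum(N) ≤ v_{i,sum}`. -/

open Finset

namespace List.Pairwise

variable {α : Type*} [Preorder α] {L : List α} (hL : L.Pairwise (· ≤ ·))
  {idx : ℕ} (hidx : idx < L.length) (p : α → Prop) [DecidablePred p]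
include hL hidx

lemma getElem_le_getElem_of_le {j : ℕ} (hj : j < L.length) (hij : idx ≤ j) :
    L[idx] ≤ L[j] := by
  rcases hij.eq_or_lt with rfl | hlt
  · exact le_rfl
  · exact List.pairwise_iff_getElem.1 hL idx j hidx hj hlt

lemma length_sub_le_countP (hp : ∀ x, L[idx] ≤ x → p x) :
    L.length - idx ≤ L.countP (fun x => p x) := by
  have hdrop : (L.drop idx).countP (fun x => p x) = (L.drop idx).length := by
    refine List.countP_eq_length.2 fun a ha => ?_
    obtain ⟨j, hj, rfl⟩ := List.mem_iff_getElem.1 ha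
    rw [List.length_drop] at hj
    rw [List.getElem_drop, decide_eq_true_eq]
    exact hp _ (getElem_le_getElem_of_le hL hidx _ (Nat.le_add_right idx j))
  calc L.length - idx = (L.drop idx).countP (fun x => p x) := by rw [hdrop, List.length_drop]
    _ ≤ L.countP (fun x => p x) := (List.drop_sublist idx L).countP_le

lemma countP_le_length_sub (hp : ∀ x, p x → L[idx] < x) :
    L.countP (fun x => p x) ≤ L.length - (idx + 1) := by
  have htake : (L.take (idx + 1)).countP (fun x => p x) = 0 := by
    refine List.countP_eq_zero.2 fun a ha hpa => ?_
    obtain ⟨j, hj, rfl⟩ := List.mem_iff_getElem.1 ha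
    rw [List.length_take] at hj
    rw [List.getElem_take, decide_eq_true_eq] at hpa
    exact (hp _ hpa).not_ge (getElem_le_getElem_of_le hL _ hidx (by omega))
  calc L.countP (fun x => p x)
      = (L.take (idx + 1) ++ L.drop (idx + 1)).countP (fun x => p x) := by
        rw [List.take_append_drop]
    _ = (L.drop (idx + 1)).countP (fun x => p x) := by
        rw [List.countP_append, htake, zero_add]
    _ ≤ L.length - (idx + 1) := List.countP_le_length.trans_eq List.length_drop

end List.Pairwise

section kthLargest

variable {α : Type*} (S : Finset α) (f : α → ℝ) {m : ℕ}

lemma length_sort_map : ((S.val.map f).sort (· ≤ ·)).length = #S := by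
  rw [Multiset.length_sort, Multiset.card_map, card_val]

lemma countP_sort_map (p : ℝ → Prop) [DecidablePred p] :
    ((S.val.map f).sort (· ≤ ·)).countP (fun x => p x) = #(S.filter fun a => p (f a)) := by
  rw [← Multiset.coe_countP, Multiset.sort_eq, Multiset.countP_map]
  rfl

lemma kthLargest_eq_getElem (hm : 1 ≤ m) (hmS : m ≤ #S) :
    kthLargest S f m =
      ((S.val.map f).sort (· ≤ ·))[#S - m]'(by rw [length_sort_map]; omega) := by
  rw [kthLargest, if_pos ⟨hm, hmS⟩, List.getD_eq_getElem]

lemma kthLargest_nonneg (hf : ∀ x ∈ S, 0 ≤ f x) : 0 ≤ kthLargest S f m := by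
  by_cases h : 1 ≤ m ∧ m ≤ #S
  · rw [kthLargest_eq_getElem S f h.1 h.2]
    obtain ⟨x, hx, hfx⟩ := Multiset.mem_map.1 <|
      (Multiset.mem_sort (s := S.val.map f) (r := (· ≤ ·))).1 (List.getElem_mem _)
    exact hfx ▸ hf x hx
  · rw [kthLargest, if_neg h]

lemma le_card_filter_kthLargest_le (hm : 1 ≤ m) (hmS : m ≤ #S) :
    m ≤ #(S.filter fun x => kthLargest S f m ≤ f x) := by
  have key := (Multiset.pairwise_sort (S.val.map f) (· ≤ ·)).length_sub_le_countP
    (by rw [length_sort_map]; omega : #S - m < _) (kthLargest S f m ≤ ·)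
    (fun x hx => (kthLargest_eq_getElem S f hm hmS).trans_le hx)
  rw [countP_sort_map, length_sort_map] at key
  omega

lemma le_kthLargest {a : ℝ} (hm : 1 ≤ m) (hc : m ≤ #(S.filter fun x => a ≤ f x)) :
    a ≤ kthLargest S f m := by
  have hmS : m ≤ #S := hc.trans (card_filter_le _ _)
  by_contra! hlt
  have key := (Multiset.pairwise_sort (S.val.map f) (· ≤ ·)).countP_le_length_sub
    (by rw [length_sort_map]; omega : #S - m < _) (a ≤ ·)
    (fun x hx => (kthLargest_eq_getElem S f hm hmS ▸ hlt).trans_le hx)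
  rw [countP_sort_map, length_sort_map] at key
  omega

lemma kthLargest_le {a : ℝ} (ha : 0 ≤ a) (hc : #(S.filter fun x => a < f x) < m) :
    kthLargest S f m ≤ a := by
  by_cases h : 1 ≤ m ∧ m ≤ #S
  · by_contra! hlt
    have key := (Multiset.pairwise_sort (S.val.map f) (· ≤ ·)).length_sub_le_countP
      (by rw [length_sort_map]; omega : #S - m < _) (a < ·)
      (fun x hx => (kthLargest_eq_getElem S f h.1 h.2 ▸ hlt).trans_le hx)
    rw [countP_sort_map, length_sort_map] at key
    omega
  · rw [kthLargest, if_neg h]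
    exact ha

variable {S}

lemma kthLargest_mono {T : Finset α} (hST : S ⊆ T) (hf : ∀ x ∈ T, 0 ≤ f x) :
    kthLargest S f m ≤ kthLargest T f m := by
  by_cases h : 1 ≤ m ∧ m ≤ #S
  · refine le_kthLargest T f h.1 ?_
    calc m ≤ #(S.filter fun x => kthLargest S f m ≤ f x) :=
          le_card_filter_kthLargest_le S f h.1 h.2
      _ ≤ #(T.filter fun x => kthLargest S f m ≤ f x) :=
          card_le_card (filter_subset_filter _ hST)
  · rw [kthLargest, if_neg h]
    exact kthLargest_nonneg T f hf

end kthLargest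

lemma nkSum_nonneg (k : ℕ) {n : ℕ} {v : Fin n → ℕ → ℝ} {i : Fin n}
    (hv : ∀ l, 0 ≤ v i l) :
    0 ≤ nkSum k v i :=
  sum_nonneg fun l _ => hv l

lemma kthLargest_le_nkSum_of_wins {k n : ℕ} {A : Finset (Fin n)} {v : Fin n → ℕ → ℝ}
    {i : Fin n} (hv : ∀ l, 0 ≤ v i l) (hW : Wins k A v i) :
    kthLargest A (nkSum k v) (Nat.sqrt k) ≤ nkSum k v i := by
  refine kthLargest_le A _ (nkSum_nonneg k hv) (lt_of_le_of_lt (card_le_card ?_) hW.2)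
  exact monotone_filter_right A fun _ _ => Or.inl

theorem gapg_individually_rational_general (n k : ℕ)
    (A : Finset (Fin n)) (v : Fin n → ℕ → ℝ)
    (hv : ∀ j, (∀ l, 0 ≤ v j l) ∧ ∀ l, l + 1 < k → v j (l + 1) ≤ v j l)
    (i : Fin n) :
    (kthLargest (A.filter (· < i)) (nkSum k v) (Nat.sqrt k)
        ≤ kthLargest A (nkSum k v) (Nat.sqrt k)) ∧
    (Wins k A v i → kthLargest A (nkSum k v) (Nat.sqrt k) ≤ nkSum k v i) ∧
    0 ≤ gapgUtil k A v i (v i) := by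
  have hP : kthLargest (A.filter (· < i)) (nkSum k v) (Nat.sqrt k)
      ≤ kthLargest A (nkSum k v) (Nat.sqrt k) :=
    kthLargest_mono _ (filter_subset _ _) fun j _ => nkSum_nonneg k (hv j).1
  have hW : Wins k A v i → kthLargest A (nkSum k v) (Nat.sqrt k) ≤ nkSum k v i :=
    kthLargest_le_nkSum_of_wins (hv i).1
  refine ⟨hP, hW, ?_⟩
  unfold gapgUtil
  split_ifs with hwin
  · exact sub_nonneg.2 (hP.trans (hW hwin))
  · exact sub_nonneg.2 hP

/-- **Individual rationality of the GAPG mechanism.**  A truthful winner has utility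
`v_{i,sum} − v*_sum(P_i^close, n_k) ≥ v*_sum(N, n_k) − v*_sum(P_i^close, n_k) ≥ 0`, and a
truthful loser receives the nonnegative rebate `v*_sum(N, n_k) − v*_sum(P_i^close, n_k)`,
since the `n_k`-th largest `n_k`-sum valuation over all informed buyers is at least that
over the subset `P_i^close`.  Hence every truthful buyer gets nonnegative utility. -/
theorem gapg_individually_rational (n k : ℕ) (hk : 0 < k)
    (A : Finset (Fin n)) (v : Fin n → ℕ → ℝ)
    (hv : ∀ j, (∀ l, 0 ≤ v j l) ∧ ∀ l, l + 1 < k → v j (l + 1) ≤ v j l)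
    (i : Fin n) (hi : i ∈ A) :
    (kthLargest (A.filter (· < i)) (nkSum k v) (Nat.sqrt k)
        ≤ kthLargest A (nkSum k v) (Nat.sqrt k)) ∧
    (Wins k A v i → kthLargest A (nkSum k v) (Nat.sqrt k) ≤ nkSum k v i) ∧
    0 ≤ gapgUtil k A v i (v i) :=
  gapg_individually_rational_general n k A v hv i
end

section
/- In the α-APG mechanism, a buyer i who is classified into Group 4 when truthful (i.e., i is strictly farther than the winner, so v*_{P_i^close} ≥ α·v*_N ≥ α·v_i) can only be classified into Group 3 or Group 4 under any misreport, and switching to Group 3 yields utility v_i − v*_{P_i^close}/α ≤ 0; hence truthful reporting (utility 0) is optimal for her. -/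
open scoped Classical

/-- Maximum declared valuation over a set of buyers (`0` on the empty set). This is `v*_S`. -/
noncomputable def vstar {n : ℕ} (S : Finset (Fin n)) (v : Fin n → ℝ) : ℝ :=
  S.fold max 0 v

/-- Buyers of `A` strictly closer to the seller than `i` on the aligned path graph: `P_i^close`. -/
def closeSet {n : ℕ} (A : Finset (Fin n)) (i : Fin n) : Finset (Fin n) :=
  A.filter (· < i)

/-- Buyers of `A` strictly farther from the seller than `i`: `P_i^far`. -/
def farSet {n : ℕ} (A : Finset (Fin n)) (i : Fin n) : Finset (Fin n) :=
  A.filter (i < ·)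

/-- The α-APG winner: the informed buyer closest to the seller with declared value ≥ `α·v*_N`. -/
def IsWinner {n : ℕ} (α : ℝ) (A : Finset (Fin n)) (v : Fin n → ℝ) (i : Fin n) : Prop :=
  i ∈ A ∧ α * vstar A v ≤ v i ∧ ∀ j ∈ A, α * vstar A v ≤ v j → i ≤ j

/-- The α-APG payment rule (Groups 1–4). -/
noncomputable def apgPay {n : ℕ} (α : ℝ) (A : Finset (Fin n)) (v : Fin n → ℝ)
    (i : Fin n) : ℝ :=
  if IsWinner α A v i then
    (if vstar (closeSet A i) v < α * vstar (farSet A i) v then vstar (closeSet A i) v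
     else vstar (closeSet A i) v / α)
  else if (i ∈ A ∧ ∃ w, IsWinner α A v w ∧ i < w) then
    vstar (closeSet A i) v - α * vstar A v
  else 0

/-- Quasi-linear utility of buyer `i` with true valuation `vi` under the α-APG mechanism. -/
noncomputable def apgUtil {n : ℕ} (α : ℝ) (A : Finset (Fin n)) (v : Fin n → ℝ)
    (i : Fin n) (vi : ℝ) : ℝ :=
  (if IsWinner α A v i then vi else 0) - apgPay α A v i

lemma le_vstar {n : ℕ} {S : Finset (Fin n)} {v : Fin n → ℝ} {j : Fin n} (hj : j ∈ S) :
    v j ≤ vstar S v :=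
  (Finset.le_fold_max _).2 (Or.inr ⟨j, hj, le_rfl⟩)

lemma vstar_nonneg {n : ℕ} (S : Finset (Fin n)) (v : Fin n → ℝ) : 0 ≤ vstar S v :=
  (Finset.le_fold_max _).2 (Or.inl le_rfl)

lemma vstar_mono {n : ℕ} {S T : Finset (Fin n)} (h : S ⊆ T) (v : Fin n → ℝ) :
    vstar S v ≤ vstar T v :=
  (Finset.fold_max_le _).2 ⟨vstar_nonneg T v, fun x hx => le_vstar (h hx)⟩

lemma vstar_congr {n : ℕ} {S : Finset (Fin n)} {v v' : Fin n → ℝ}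
    (h : ∀ j ∈ S, v j = v' j) : vstar S v = vstar S v' :=
  Finset.fold_congr h

lemma vstar_exists {n : ℕ} {S : Finset (Fin n)} (hS : S.Nonempty) {v : Fin n → ℝ}
    (hv : ∀ j, 0 ≤ v j) : ∃ j ∈ S, vstar S v ≤ v j := by
  obtain ⟨j, hjS, hj⟩ := S.exists_max_image v hS
  exact ⟨j, hjS, (Finset.fold_max_le _).2 ⟨hv j, hj⟩⟩

/-- **Group 4 analysis of the α-APG mechanism.**  If buyer `i` is strictly farther than the
truthful winner `w` (Group 4), then `v*_{P_i^close} ≥ α·v*_N ≥ α·v_i`, her truthful utility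
is `0`, and under any misreport (valuation `v'` and withholding a set `D` of farther buyers)
the new winner is never farther than `i` (so `i` can only be in Group 3 or 4), and her
deviating utility is at most `0`; hence truthful reporting is optimal. -/
theorem apg_group4_truthful_optimal (n : ℕ) (α : ℝ) (hα0 : 0 < α) (hα1 : α < 1)
    (A : Finset (Fin n)) (v : Fin n → ℝ) (hv : ∀ j, 0 ≤ v j)
    (i : Fin n) (hi : i ∈ A)
    (w : Fin n) (hw : IsWinner α A v w) (hfar : w < i) :
    (α * vstar A v ≤ vstar (closeSet A i) v ∧ α * v i ≤ vstar (closeSet A i) v) ∧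
    apgUtil α A v i (v i) = 0 ∧
    (∀ (v' : ℝ), 0 ≤ v' → ∀ D : Finset (Fin n), (∀ j ∈ D, i < j) →
      (∀ w', IsWinner α (A \ D) (Function.update v i v') w' → w' ≤ i) ∧
      apgUtil α (A \ D) (Function.update v i v') i (v i) ≤ 0) := by
  have hwci : w ∈ closeSet A i := Finset.mem_filter.2 ⟨hw.1, hfar⟩
  have key1 : α * vstar A v ≤ vstar (closeSet A i) v :=
    le_trans hw.2.1 (le_vstar hwci)
  have key2 : α * v i ≤ vstar (closeSet A i) v :=
    le_trans (mul_le_mul_of_nonneg_left (le_vstar (v := v) hi) hα0.le) key1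
  have hnotwin : ¬ IsWinner α A v i := fun h => absurd (h.2.2 w hw.1 hw.2.1) (not_le.2 hfar)
  refine ⟨⟨key1, key2⟩, ?_, ?_⟩
  · have hnog : ¬ (i ∈ A ∧ ∃ w', IsWinner α A v w' ∧ i < w') := by
      rintro ⟨-, w', hw', hlt⟩
      have h1 : w' ≤ w := hw'.2.2 w hw.1 hw.2.1
      exact absurd (lt_of_lt_of_le hlt h1) (not_lt.2 hfar.le)
    simp [apgUtil, apgPay, hnotwin, hnog]
  · intro v' hv' D hD
    set A' : Finset (Fin n) := A \ D with hA'
    set u : Fin n → ℝ := Function.update v i v' with hu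
    have hiD : i ∉ D := fun h => lt_irrefl i (hD i h)
    have hiA' : i ∈ A' := Finset.mem_sdiff.2 ⟨hi, hiD⟩
    have hclose_eq : closeSet A' i = closeSet A i := by
      ext j
      simp only [closeSet, Finset.mem_filter, Finset.mem_sdiff, hA']
      refine ⟨fun h => ⟨h.1.1, h.2⟩, fun h => ⟨⟨h.1, fun hjD => ?_⟩, h.2⟩⟩
      exact absurd (hD j hjD) (not_lt.2 h.2.le)
    have hu_close : ∀ j ∈ closeSet A i, u j = v j := fun j hj =>
      Function.update_of_ne (ne_of_lt (Finset.mem_filter.1 hj).2) _ _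
    have hvc : vstar (closeSet A' i) u = vstar (closeSet A i) v := by
      rw [hclose_eq]; exact vstar_congr hu_close
    have hu_nonneg : ∀ j, 0 ≤ u j := by
      intro j
      rcases eq_or_ne j i with rfl | h
      · simpa [hu] using hv'
      · simpa [hu, Function.update_of_ne h] using hv j
    have hbound : vstar A' u ≤ max (vstar A v) v' := by
      refine (Finset.fold_max_le _).2 ⟨le_max_of_le_left (vstar_nonneg A v), fun x hx => ?_⟩
      rcases eq_or_ne x i with rfl | h
      · simp [hu]
      · rw [hu, Function.update_of_ne h]
        exact le_max_of_le_left (le_vstar (Finset.mem_sdiff.1 hx).1)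
    have hwinclaim : ∀ w', IsWinner α A' u w' → w' ≤ i := by
      intro w' hw'
      by_cases h : vstar A' u ≤ vstar A v
      · obtain ⟨j, hjc, hj⟩ := vstar_exists (S := closeSet A' i)
          (by rw [hclose_eq]; exact ⟨w, hwci⟩) hu_nonneg (v := u)
        have hjlt : j < i := (Finset.mem_filter.1 hjc).2
        have hjA' : j ∈ A' := Finset.filter_subset _ _ hjc
        have : α * vstar A' u ≤ u j := by
          refine le_trans ?_ hj
          rw [hvc]
          calc α * vstar A' u ≤ α * vstar A v := by nlinarith
            _ ≤ _ := key1
        exact le_of_lt (lt_of_le_of_lt (hw'.2.2 j hjA' this) hjlt)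
      · have h2 : vstar A' u ≤ v' := (le_max_iff.1 hbound).resolve_left h
        have : α * vstar A' u ≤ u i := by
          have h0 := vstar_nonneg A' u
          simp only [hu, Function.update_self]
          nlinarith
        exact hw'.2.2 i hiA' this
    refine ⟨hwinclaim, ?_⟩
    by_cases hwin : IsWinner α A' u i
    · have hfareq : vstar (farSet A' i) u = vstar (farSet A' i) v :=
        vstar_congr fun j hj =>
          Function.update_of_ne (ne_of_gt (Finset.mem_filter.1 hj).2) _ _
      have hfarle : vstar (farSet A' i) v ≤ vstar A v :=
        vstar_mono (le_trans (Finset.filter_subset _ _) (Finset.sdiff_subset)) v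
      have hnolt : ¬ (vstar (closeSet A' i) u < α * vstar (farSet A' i) u) := by
        rw [hvc, hfareq, not_lt]
        calc α * vstar (farSet A' i) v ≤ α * vstar A v := by nlinarith
          _ ≤ _ := key1
      have hpay : apgPay α A' u i = vstar (closeSet A i) v / α := by
        rw [apgPay, if_pos hwin, if_neg hnolt, hvc]
      rw [apgUtil, if_pos hwin, hpay]
      rw [sub_nonpos, le_div_iff₀ hα0]
      linarith [key2]
    · have hnog : ¬ (i ∈ A' ∧ ∃ w', IsWinner α A' u w' ∧ i < w') := by
        rintro ⟨-, w', hw', hlt⟩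
        exact absurd (hwinclaim w' hw') (not_le.2 hlt)
      simp [apgUtil, apgPay, hwin, hnog]
end
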